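/- arXiv:2407.18111 — 3 statements merged into one kernel-verified Lean document; each statement's English description precedes it below -/
import Mathlib

section
/- Let O be a finite set of operations with machine assignment mach : O → M, processing times delay : O → ℝ with delay(x) ≥ 0, and a partial immediate-predecessor function pre. Let X be a list of operations and let (f^M, f^O) and (g^M, g^O) be two initial states with f^M(k) ≤ g^M(k) for every machine k and f^O(x) ≤ g^O(x) for every operation x. Then the makespan returned by CFP applied to X from initial state (f^M, f^O) is at most the makespan returned by CFP applied to X from initial state (g^M, g^O). -/
noncomputable section

/-- One step of the cost-from-partial (CFP) procedure: process operation `x`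
from state `st = (f^M, f^O)` of machine- and operation-completion times.
We set `s := max (f^M (mach x)) (f^O (pre x))` (the second term omitted when
`x` has no immediate predecessor) and record `s + delay x` as the new
completion time of both `x` and its machine. -/
def JSP.step {O M : Type*} [DecidableEq O] [DecidableEq M]
    (mach : O → M) (delay : O → ℝ) (pre : O → Option O)
    (st : (M → ℝ) × (O → ℝ)) (x : O) : (M → ℝ) × (O → ℝ) :=
  let s : ℝ := match pre x with
    | none => st.1 (mach x)
    | some y => max (st.1 (mach x)) (st.2 y)
  (Function.update st.1 (mach x) (s + delay x),
   Function.update st.2 x (s + delay x))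

/-- The cost-from-partial procedure (Algorithm CFP): process the list `X` of
operations left to right from the initial state `st = (f^M, f^O)`, and return
the resulting makespan, i.e. the maximum over all machines `k` of the final
machine-completion time `f^M k`. -/
def JSP.CFP {O M : Type*} [DecidableEq O] [DecidableEq M] [Fintype M] [Nonempty M]
    (mach : O → M) (delay : O → ℝ) (pre : O → Option O)
    (X : List O) (st : (M → ℝ) × (O → ℝ)) : ℝ :=
  Finset.univ.sup' Finset.univ_nonempty (X.foldl (JSP.step mach delay pre) st).1



lemma JSP.step_mono {O M : Type*} [DecidableEq O] [DecidableEq M]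
    (mach : O → M) (delay : O → ℝ) (pre : O → Option O)
    (st st' : (M → ℝ) × (O → ℝ)) (x : O)
    (hM : ∀ k, st.1 k ≤ st'.1 k) (hO : ∀ y, st.2 y ≤ st'.2 y) :
    (∀ k, (JSP.step mach delay pre st x).1 k ≤ (JSP.step mach delay pre st' x).1 k) ∧
    (∀ y, (JSP.step mach delay pre st x).2 y ≤ (JSP.step mach delay pre st' x).2 y) := by
  have hs : (match pre x with
      | none => st.1 (mach x)
      | some y => max (st.1 (mach x)) (st.2 y)) ≤
      (match pre x with
      | none => st'.1 (mach x)
      | some y => max (st'.1 (mach x)) (st'.2 y)) := by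
    cases pre x with
    | none => exact hM _
    | some y => exact max_le_max (hM _) (hO _)
  constructor
  · intro k
    simp only [JSP.step, Function.update]
    split <;> simp_all [add_le_add_iff_right]
  · intro y
    simp only [JSP.step, Function.update]
    split <;> simp_all [add_le_add_iff_right]

lemma JSP.foldl_mono {O M : Type*} [DecidableEq O] [DecidableEq M]
    (mach : O → M) (delay : O → ℝ) (pre : O → Option O)
    (X : List O) :
    ∀ st st' : (M → ℝ) × (O → ℝ), (∀ k, st.1 k ≤ st'.1 k) → (∀ y, st.2 y ≤ st'.2 y) →
    (∀ k, (X.foldl (JSP.step mach delay pre) st).1 k ≤ (X.foldl (JSP.step mach delay pre) st').1 k) := by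
  induction X with
  | nil => intro st st' hM hO; exact hM
  | cons x xs ih =>
    intro st st' hM hO
    obtain ⟨h1, h2⟩ := JSP.step_mono mach delay pre st st' x hM hO
    exact ih _ _ h1 h2

/-- Monotonicity of CFP: if every machine- and operation-completion time of
one initial state is bounded by the corresponding value of another, then the
makespan returned by CFP from the first state is at most that from the
second.  This is the core of the validity of the DD merge operation. -/
theorem JSP.CFP_monotone {O M : Type*} [DecidableEq O] [DecidableEq M]
    [Fintype O] [Fintype M] [Nonempty M]
    (mach : O → M) (delay : O → ℝ) (pre : O → Option O)
    (hdelay : ∀ x, 0 ≤ delay x)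
    (X : List O) (fM gM : M → ℝ) (fO gO : O → ℝ)
    (hM : ∀ k, fM k ≤ gM k) (hO : ∀ x, fO x ≤ gO x) :
    JSP.CFP mach delay pre X (fM, fO) ≤ JSP.CFP mach delay pre X (gM, gO) := by
  apply Finset.sup'_le
  intro k _
  exact le_trans (JSP.foldl_mono mach delay pre X (fM,fO) (gM,gO) hM hO k)
    (Finset.le_sup' _ (Finset.mem_univ k))

end
end

section
/- Let O be a finite set of operations with machine assignment mach : O → M, processing times delay : O → ℝ, and a partial immediate-predecessor function pre, and let X be a list of operations none of which occurs twice. Let (f^M, f^O) and (f^M, g^O) be two initial states with the same machine-completion vector f^M, such that f^O(y) = g^O(y) for every operation y that is the immediate predecessor pre(x) of some operation x occurring in X. Then CFP applied to X from (f^M, f^O) returns the same makespan as CFP applied to X from (f^M, g^O). In particular, the completion times of 'long-done' operations—those that are not the immediate predecessor of any remaining operation—may be discarded from the state without changing any future cost. -/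
noncomputable section

/-! A CFP step reads the operation vector only at `pre x` and writes it only at `x`, with the same
value in two runs that agree on the machine vector and at `pre x`. So, by induction along `X`, two
runs from the same machine vector keep equal machine vectors and keep agreeing at the predecessors
of all operations still to be processed. -/

namespace JSP

variable {O M : Type*} [DecidableEq O] [DecidableEq M]
  (mach : O → M) (delay : O → ℝ) (pre : O → Option O)

theorem step_snd_of_ne (st : (M → ℝ) × (O → ℝ)) {x y : O} (hyx : y ≠ x) :
    (step mach delay pre st x).2 y = st.2 y :=
  Function.update_of_ne hyx _ _

theorem step_congr {st₁ st₂ : (M → ℝ) × (O → ℝ)} {x : O} (h₁ : st₁.1 = st₂.1)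
    (h₂ : ∀ y, pre x = some y → st₁.2 y = st₂.2 y) :
    (step mach delay pre st₁ x).1 = (step mach delay pre st₂ x).1 ∧
      (step mach delay pre st₁ x).2 x = (step mach delay pre st₂ x).2 x := by
  cases hp : pre x with
  | none => simp [step, hp, h₁]
  | some y => simp [step, hp, h₁, h₂ y hp]

theorem foldl_step_fst_congr (X : List O) {st₁ st₂ : (M → ℝ) × (O → ℝ)} (h₁ : st₁.1 = st₂.1)
    (h₂ : ∀ x ∈ X, ∀ y, pre x = some y → st₁.2 y = st₂.2 y) :
    (X.foldl (step mach delay pre) st₁).1 = (X.foldl (step mach delay pre) st₂).1 := by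
  induction X generalizing st₁ st₂ with
  | nil => exact h₁
  | cons x xs ih =>
    obtain ⟨hfst, hx⟩ := step_congr mach delay pre h₁ (h₂ x List.mem_cons_self)
    refine ih hfst fun x' hx' y hy => ?_
    by_cases hyx : y = x
    · exact hyx ▸ hx
    · rw [step_snd_of_ne _ _ _ _ hyx, step_snd_of_ne _ _ _ _ hyx]
      exact h₂ x' (List.mem_cons_of_mem x hx') y hy

end JSP

theorem JSP.CFP_ignores_longDone_general {O M : Type*} [DecidableEq O] [DecidableEq M]
    [Fintype M] [Nonempty M]
    (mach : O → M) (delay : O → ℝ) (pre : O → Option O)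
    (X : List O)
    (fM : M → ℝ) (fO gO : O → ℝ)
    (hpre : ∀ y : O, (∃ x ∈ X, pre x = some y) → fO y = gO y) :
    JSP.CFP mach delay pre X (fM, fO) = JSP.CFP mach delay pre X (fM, gO) := by
  unfold JSP.CFP
  congr 1
  exact JSP.foldl_step_fst_congr mach delay pre X rfl fun x hx y hy => hpre y ⟨x, hx, hy⟩

/-- Symmetry reduction (Model 2): if a list `X` of operations has no
duplicates, then the makespan returned by CFP on `X` depends on the initial
operation-completion times only through the values of operations that are the
immediate predecessor of some operation occurring in `X`.  Completion times
of "long-done" operations may be discarded from the state. -/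
theorem JSP.CFP_ignores_longDone {O M : Type*} [DecidableEq O] [DecidableEq M]
    [Fintype O] [Fintype M] [Nonempty M]
    (mach : O → M) (delay : O → ℝ) (pre : O → Option O)
    (X : List O) (hX : X.Nodup)
    (fM : M → ℝ) (fO gO : O → ℝ)
    (hpre : ∀ y : O, (∃ x ∈ X, pre x = some y) → fO y = gO y) :
    JSP.CFP mach delay pre X (fM, fO) = JSP.CFP mach delay pre X (fM, gO) :=
  JSP.CFP_ignores_longDone_general mach delay pre X fM fO gO hpre

end
end

section
/- Let O be a finite set of operations with machine assignment mach : O → M, processing times delay : O → ℝ with delay(x) ≥ 0, and a partial immediate-predecessor function pre. Let X be a list enumerating all operations of O exactly once such that whenever an operation x has an immediate predecessor pre(x), that predecessor occurs in X strictly before x. Run CFP on X from the all-zero initial state, and for each operation x let C(x) be the completion time assigned to x and let S(x) := C(x) − delay(x) be its start time. Then: (a) S(x) ≥ 0 for every x; (b) S(x) ≥ C(pre(x)) whenever x has an immediate predecessor; (c) for any two distinct operations x, y with mach(x) = mach(y), either S(x) ≥ C(y) or S(y) ≥ C(x); and (d) the makespan returned by CFP equals max over x of C(x). -/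
noncomputable section

/-- `u` occurs strictly before `v` in the list `L`. -/
def List.OccursBefore {O : Type*} (L : List O) (u v : O) : Prop :=
  ∃ l₁ l₂ : List O, L = l₁ ++ u :: l₂ ∧ v ∈ l₂

/-!
Processing an operation changes no other operation's completion time, so the final `C x` is the
value written when `x` is processed: `C x = s + delay x`, where `s` dominates both the current
time of `mach x` and `C (pre x)`. With nonnegative delays, machine times only grow, and each one
dominates the completion times of the operations already run on it; hence an operation processed
later on a machine starts after every earlier one there has finished. Finally each machine time
is its initial value `0` or the completion time of the last operation run on it, which gives
the makespan.
-/

namespace List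

variable {α : Type*}

theorem OccursBefore.exists_append_cons {L : List α} {u v : α} (h : L.OccursBefore u v) :
    ∃ P Q, L = P ++ v :: Q ∧ u ∈ P := by
  obtain ⟨l₁, l₂, rfl, hv⟩ := h
  obtain ⟨b₁, b₂, rfl⟩ := List.append_of_mem hv
  exact ⟨l₁ ++ u :: b₁, b₂, by simp, by simp⟩

theorem occursBefore_or_occursBefore {L : List α} {u v : α} (hu : u ∈ L) (hv : v ∈ L)
    (hne : u ≠ v) : L.OccursBefore u v ∨ L.OccursBefore v u := by
  obtain ⟨a, b, rfl⟩ := List.append_of_mem hu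
  rcases List.mem_append.mp hv with hv | hv
  · obtain ⟨a₁, a₂, rfl⟩ := List.append_of_mem hv
    exact Or.inr ⟨a₁, a₂ ++ u :: b, by simp, by simp⟩
  · obtain rfl | hv := List.mem_cons.mp hv
    · exact absurd rfl hne
    · exact Or.inl ⟨a, b, rfl, hv⟩

end List

namespace JSP

variable {O M : Type*} (mach : O → M) (delay : O → ℝ) (pre : O → Option O)

/-- The start time `s` that `JSP.step` assigns to `x` in state `st`. -/
def startTime (st : (M → ℝ) × (O → ℝ)) (x : O) : ℝ :=
  match pre x with
  | none => st.1 (mach x)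
  | some y => max (st.1 (mach x)) (st.2 y)

theorem fst_le_startTime (st : (M → ℝ) × (O → ℝ)) (x : O) :
    st.1 (mach x) ≤ startTime mach pre st x := by
  rcases h : pre x with _ | y <;> simp [startTime, h]

theorem snd_le_startTime {st : (M → ℝ) × (O → ℝ)} {x y : O} (h : pre x = some y) :
    st.2 y ≤ startTime mach pre st x := by
  simp [startTime, h]

variable [DecidableEq O] [DecidableEq M]

theorem step_fst (st : (M → ℝ) × (O → ℝ)) (x : O) :
    (step mach delay pre st x).1 =
      Function.update st.1 (mach x) (startTime mach pre st x + delay x) := rfl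

theorem step_snd (st : (M → ℝ) × (O → ℝ)) (x : O) :
    (step mach delay pre st x).2 =
      Function.update st.2 x (startTime mach pre st x + delay x) := rfl

theorem foldl_step_snd_of_notMem {L : List O} {x : O} (hx : x ∉ L)
    (st : (M → ℝ) × (O → ℝ)) : (L.foldl (step mach delay pre) st).2 x = st.2 x := by
  induction L generalizing st with
  | nil => rfl
  | cons z L ih =>
    simp only [List.mem_cons, not_or] at hx
    rw [List.foldl_cons, ih hx.2, step_snd]
    exact Function.update_of_ne hx.1 _ _

theorem foldl_step_snd_append_of_mem {P Q : List O} (hnd : (P ++ Q).Nodup) {y : O} (hy : y ∈ P)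
    (st : (M → ℝ) × (O → ℝ)) :
    ((P ++ Q).foldl (step mach delay pre) st).2 y = (P.foldl (step mach delay pre) st).2 y := by
  have hyQ : y ∉ Q := fun h => (List.nodup_append.mp hnd).2.2 y hy y h rfl
  rw [List.foldl_append, foldl_step_snd_of_notMem mach delay pre hyQ]

theorem foldl_step_snd_append_cons_sub_delay {P Q : List O} {x : O} (hnd : (P ++ x :: Q).Nodup)
    (st : (M → ℝ) × (O → ℝ)) :
    ((P ++ x :: Q).foldl (step mach delay pre) st).2 x - delay x =
      startTime mach pre (P.foldl (step mach delay pre) st) x := by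
  have hxQ : x ∉ Q := (List.nodup_cons.mp (List.nodup_append.mp hnd).2.1).1
  rw [List.foldl_append, List.foldl_cons, foldl_step_snd_of_notMem mach delay pre hxQ, step_snd,
    Function.update_self, add_sub_cancel_right]

theorem fst_le_foldl_step_fst (hdelay : ∀ x, 0 ≤ delay x) (L : List O)
    (st : (M → ℝ) × (O → ℝ)) (k : M) : st.1 k ≤ (L.foldl (step mach delay pre) st).1 k := by
  induction L generalizing st with
  | nil => exact le_rfl
  | cons z L ih =>
    refine le_trans ?_ (ih _)
    rw [step_fst]
    by_cases hk : k = mach z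
    · subst hk
      simpa only [Function.update_self] using
        le_add_of_le_of_nonneg (fst_le_startTime mach pre st z) (hdelay z)
    · rw [Function.update_of_ne hk]

theorem foldl_step_snd_le_fst (hdelay : ∀ x, 0 ≤ delay x) (L : List O)
    {st : (M → ℝ) × (O → ℝ)} {x : O} (h : st.2 x ≤ st.1 (mach x)) :
    (L.foldl (step mach delay pre) st).2 x ≤ (L.foldl (step mach delay pre) st).1 (mach x) := by
  induction L generalizing st with
  | nil => exact h
  | cons z L ih =>
    refine ih ?_
    rw [step_fst, step_snd]
    by_cases hz : z = x
    · subst hz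
      rw [Function.update_self, Function.update_self]
    rw [Function.update_of_ne (Ne.symm hz)]
    by_cases hm : mach x = mach z
    · rw [hm, Function.update_self]
      rw [hm] at h
      linarith [fst_le_startTime mach pre st z, hdelay z]
    · rwa [Function.update_of_ne hm]

theorem foldl_step_fst_eq_or_exists {L : List O} (hnd : L.Nodup) (st : (M → ℝ) × (O → ℝ))
    (k : M) :
    (L.foldl (step mach delay pre) st).1 k = st.1 k ∨
      ∃ x ∈ L, (L.foldl (step mach delay pre) st).1 k = (L.foldl (step mach delay pre) st).2 x := by
  induction L generalizing st with
  | nil => exact Or.inl rfl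
  | cons z L ih =>
    obtain ⟨hzL, hnd⟩ := List.nodup_cons.mp hnd
    rw [List.foldl_cons]
    obtain h | ⟨x, hx, h⟩ := ih hnd (step mach delay pre st z)
    · rw [h, step_fst]
      by_cases hk : k = mach z
      · subst hk
        refine Or.inr ⟨z, List.mem_cons_self, ?_⟩
        rw [foldl_step_snd_of_notMem mach delay pre hzL, step_snd, Function.update_self,
          Function.update_self]
      · exact Or.inl (Function.update_of_ne hk _ _)
    · exact Or.inr ⟨x, List.mem_cons_of_mem _ hx, h⟩

theorem foldl_step_snd_le_sub_delay_of_pre {L : List O} (hnd : L.Nodup) {x y : O}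
    (hxy : pre x = some y) (hyx : L.OccursBefore y x) (st : (M → ℝ) × (O → ℝ)) :
    (L.foldl (step mach delay pre) st).2 y ≤ (L.foldl (step mach delay pre) st).2 x - delay x := by
  obtain ⟨P, Q, rfl, hy⟩ := hyx.exists_append_cons
  rw [foldl_step_snd_append_of_mem mach delay pre hnd hy,
    foldl_step_snd_append_cons_sub_delay mach delay pre hnd]
  exact snd_le_startTime mach pre hxy

theorem foldl_step_snd_le_sub_delay_of_mach (hdelay : ∀ x, 0 ≤ delay x) {L : List O}
    (hnd : L.Nodup) {x y : O} (hm : mach y = mach x) (hyx : L.OccursBefore y x)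
    {st : (M → ℝ) × (O → ℝ)} (hst : st.2 y ≤ st.1 (mach y)) :
    (L.foldl (step mach delay pre) st).2 y ≤ (L.foldl (step mach delay pre) st).2 x - delay x := by
  obtain ⟨P, Q, rfl, hy⟩ := hyx.exists_append_cons
  rw [foldl_step_snd_append_of_mem mach delay pre hnd hy,
    foldl_step_snd_append_cons_sub_delay mach delay pre hnd]
  calc (P.foldl (step mach delay pre) st).2 y
      ≤ (P.foldl (step mach delay pre) st).1 (mach y) :=
        foldl_step_snd_le_fst mach delay pre hdelay P hst
    _ ≤ startTime mach pre (P.foldl (step mach delay pre) st) x :=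
        hm ▸ fst_le_startTime mach pre _ x

theorem foldl_step_snd_sub_delay_nonneg (hdelay : ∀ x, 0 ≤ delay x) {L : List O} (hnd : L.Nodup)
    {x : O} (hx : x ∈ L) {st : (M → ℝ) × (O → ℝ)} (hst : ∀ k, 0 ≤ st.1 k) :
    0 ≤ (L.foldl (step mach delay pre) st).2 x - delay x := by
  obtain ⟨P, Q, rfl⟩ := List.append_of_mem hx
  rw [foldl_step_snd_append_cons_sub_delay mach delay pre hnd]
  exact (hst _).trans <| (fst_le_foldl_step_fst mach delay pre hdelay P st _).trans <|
    fst_le_startTime mach pre _ x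

theorem sup'_foldl_step_fst_eq_sup'_snd [Fintype O] [Nonempty O] [Fintype M] [Nonempty M]
    (hdelay : ∀ x, 0 ≤ delay x) {L : List O} (hnd : L.Nodup) (hall : ∀ x, x ∈ L) :
    Finset.univ.sup' Finset.univ_nonempty
        (L.foldl (step mach delay pre) ((fun _ => (0 : ℝ)), (fun _ => (0 : ℝ)))).1 =
      Finset.univ.sup' Finset.univ_nonempty
        (L.foldl (step mach delay pre) ((fun _ => (0 : ℝ)), (fun _ => (0 : ℝ)))).2 := by
  refine le_antisymm (Finset.sup'_le _ _ fun k _ => ?_) (Finset.sup'_le _ _ fun x _ => ?_)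
  · obtain h | ⟨x, -, h⟩ := foldl_step_fst_eq_or_exists mach delay pre hnd
      ((fun _ => (0 : ℝ)), (fun _ => (0 : ℝ))) k
    · obtain ⟨x⟩ := ‹Nonempty O›
      have hx := foldl_step_snd_sub_delay_nonneg mach delay pre hdelay hnd (hall x)
        (st := ((fun _ => (0 : ℝ)), (fun _ => (0 : ℝ)))) fun _ => le_rfl
      rw [h]
      refine le_trans ?_ (Finset.le_sup' _ (Finset.mem_univ x))
      linarith [hdelay x]
    · exact h ▸ Finset.le_sup' _ (Finset.mem_univ x)
  · exact (foldl_step_snd_le_fst mach delay pre hdelay L le_rfl).trans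
      (Finset.le_sup' _ (Finset.mem_univ (mach x)))

end JSP

/-- The greedy schedule produced by CFP from a job-respecting permutation of
all operations (each operation occurring exactly once, each immediate
predecessor occurring earlier) is a feasible job shop schedule: with
completion times `C x` given by the final operation-completion vector and
start times `S x := C x - delay x`, (a) starts are nonnegative, (b) each
operation starts after its immediate predecessor completes, (c) operations on
a common machine do not overlap, and (d) the makespan returned by CFP is the
maximum completion time. -/
theorem JSP.CFP_schedule_feasible {O M : Type*} [DecidableEq O] [DecidableEq M]
    [Fintype O] [Nonempty O] [Fintype M] [Nonempty M]
    (mach : O → M) (delay : O → ℝ) (pre : O → Option O)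
    (hdelay : ∀ x, 0 ≤ delay x)
    (X : List O) (hnd : X.Nodup) (hall : ∀ x : O, x ∈ X)
    (hpre : ∀ x ∈ X, ∀ y : O, pre x = some y → X.OccursBefore y x)
    (C : O → ℝ)
    (hC : C = (X.foldl (JSP.step mach delay pre)
      ((fun _ => (0 : ℝ)), (fun _ => (0 : ℝ)))).2)
    (S : O → ℝ) (hS : ∀ x, S x = C x - delay x) :
    (∀ x, 0 ≤ S x) ∧
    (∀ x y : O, pre x = some y → C y ≤ S x) ∧
    (∀ x y : O, x ≠ y → mach x = mach y → C y ≤ S x ∨ C x ≤ S y) ∧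
    JSP.CFP mach delay pre X ((fun _ => (0 : ℝ)), (fun _ => (0 : ℝ))) =
      Finset.univ.sup' Finset.univ_nonempty C := by
  simp only [hS]
  have before_same_machine : ∀ x y, X.OccursBefore y x → mach y = mach x →
      C y ≤ C x - delay x := fun x y hyx hm =>
    hC ▸ JSP.foldl_step_snd_le_sub_delay_of_mach mach delay pre hdelay hnd hm hyx le_rfl
  refine ⟨fun x => hC ▸ JSP.foldl_step_snd_sub_delay_nonneg mach delay pre hdelay hnd (hall x)
      fun _ => le_rfl,
    fun x y hxy => hC ▸ JSP.foldl_step_snd_le_sub_delay_of_pre mach delay pre hnd hxy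
      (hpre x (hall x) y hxy) _,
    fun x y hne hm => ?_,
    hC ▸ JSP.sup'_foldl_step_fst_eq_sup'_snd mach delay pre hdelay hnd hall⟩
  rcases List.occursBefore_or_occursBefore (hall x) (hall y) hne with hxy | hyx
  · exact Or.inr (before_same_machine y x hxy hm)
  · exact Or.inl (before_same_machine x y hyx hm.symm)

end
end
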